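/- Let ℓ ∈ ℕ and let (g_j)_{j≥1} be i.i.d. SL(2,ℝ)-valued random matrices with E(‖g₁‖^{2ℓ}) < ∞. Let 𝒯_ℓ be the linear endomorphism v ↦ (x ↦ E[v(x·g₁)]) of the (2ℓ+1)-dimensional complex vector space of homogeneous polynomial functions ℝ² → ℂ of degree 2ℓ, and let ρ(𝒯_ℓ) denote its spectral radius (the maximum modulus of its eigenvalues); assume ρ(𝒯_ℓ) > 0. Then for every x ∈ ℝ²∖{0}: limsup_{n→∞} (1/n)·ln E(‖x·Π_n‖^{2ℓ}) ≤ ln ρ(𝒯_ℓ), where ‖·‖ is the Euclidean norm on ℝ² and Π_n := g_n ⋯ g₂ g₁. -/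

import Mathlib

open MeasureTheory ProbabilityTheory
open scoped Matrix.Norms.L2Operator
open Filter
open scoped Matrix ENNReal NNReal

noncomputable section

abbrev SL2R := Matrix.SpecialLinearGroup (Fin 2) ℝ

instance : MeasurableSpace (Matrix (Fin 2) (Fin 2) ℝ) :=
  (inferInstance : MeasurableSpace (Fin 2 → Fin 2 → ℝ))

instance : MeasurableSpace SL2R :=
  (inferInstance : MeasurableSpace {A : Matrix (Fin 2) (Fin 2) ℝ // A.det = 1})

/-- The right action of `g ∈ SL(2,ℝ)` on a row vector `x ∈ ℝ²`: the matrix product `x·g`. -/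
def rowAct (x : ℝ × ℝ) (g : SL2R) : ℝ × ℝ :=
  (x.1 * (g : Matrix (Fin 2) (Fin 2) ℝ) 0 0 + x.2 * (g : Matrix (Fin 2) (Fin 2) ℝ) 1 0,
   x.1 * (g : Matrix (Fin 2) (Fin 2) ℝ) 0 1 + x.2 * (g : Matrix (Fin 2) (Fin 2) ℝ) 1 1)

/-- The product `Π_n = g_n ⋯ g₂ g₁` of the random matrices (here `g j` denotes `g_{j+1}`). -/
def PiProd {Ω : Type*} (g : ℕ → Ω → SL2R) : ℕ → Ω → SL2R
  | 0 => fun _ => 1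
  | n + 1 => fun ω => g n ω * PiProd g n ω

/-- The Euclidean norm on `ℝ²`. -/
def euclNorm (x : ℝ × ℝ) : ℝ := Real.sqrt (x.1 ^ 2 + x.2 ^ 2)

/-- The `(2ℓ+1)`-dimensional space of homogeneous polynomial functions `ℝ² → ℂ` of
degree `2ℓ`: the span of the monomials `x₁^k·x₂^{2ℓ-k}`, `0 ≤ k ≤ 2ℓ`. -/
def homPolySpace (ℓ : ℕ) : Submodule ℂ (ℝ × ℝ → ℂ) :=
  Submodule.span ℂ
    {f : ℝ × ℝ → ℂ | ∃ k : Fin (2 * ℓ + 1),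
      f = fun x => (x.1 : ℂ) ^ (k : ℕ) * (x.2 : ℂ) ^ (2 * ℓ - (k : ℕ))}

def Fg (s : SL2R) : ℝ :=
  Real.sqrt ((s : Matrix (Fin 2) (Fin 2) ℝ) 0 0 ^ 2 + (s : Matrix (Fin 2) (Fin 2) ℝ) 0 1 ^ 2 +
    (s : Matrix (Fin 2) (Fin 2) ℝ) 1 0 ^ 2 + (s : Matrix (Fin 2) (Fin 2) ℝ) 1 1 ^ 2)

lemma det_coe (s : SL2R) :
    (s : Matrix (Fin 2) (Fin 2) ℝ) 0 0 * (s : Matrix (Fin 2) (Fin 2) ℝ) 1 1 -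
      (s : Matrix (Fin 2) (Fin 2) ℝ) 0 1 * (s : Matrix (Fin 2) (Fin 2) ℝ) 1 0 = 1 := by
  have := s.prop
  rwa [Matrix.det_fin_two] at this

lemma Fg_nonneg (s : SL2R) : 0 ≤ Fg s := Real.sqrt_nonneg _

lemma one_le_Fg (s : SL2R) : 1 ≤ Fg s := by
  have h := det_coe s
  rw [Fg]
  calc (1:ℝ) = Real.sqrt 1 := by simp
  _ ≤ _ := Real.sqrt_le_sqrt (by

    nlinarith [sq_nonneg ((s : Matrix (Fin 2) (Fin 2) ℝ) 0 0 - (s : Matrix (Fin 2) (Fin 2) ℝ) 1 1),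
      sq_nonneg ((s : Matrix (Fin 2) (Fin 2) ℝ) 0 1 + (s : Matrix (Fin 2) (Fin 2) ℝ) 1 0)])

lemma Fg_pos (s : SL2R) : 0 < Fg s := lt_of_lt_of_le one_pos (one_le_Fg s)

lemma coe_mul_entry (s t : SL2R) (i j : Fin 2) :
    ((s * t : SL2R) : Matrix (Fin 2) (Fin 2) ℝ) i j =
      (s : Matrix (Fin 2) (Fin 2) ℝ) i 0 * (t : Matrix (Fin 2) (Fin 2) ℝ) 0 j +
      (s : Matrix (Fin 2) (Fin 2) ℝ) i 1 * (t : Matrix (Fin 2) (Fin 2) ℝ) 1 j := by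
  rw [Matrix.SpecialLinearGroup.coe_mul, Matrix.mul_apply, Fin.sum_univ_two]

lemma Fg_mul_le (s t : SL2R) : Fg (s * t) ≤ Fg s * Fg t := by
  rw [Fg, Fg, Fg, ← Real.sqrt_mul (by positivity)]
  apply Real.sqrt_le_sqrt
  simp only [coe_mul_entry]
  set a := (s : Matrix (Fin 2) (Fin 2) ℝ) 0 0
  set b := (s : Matrix (Fin 2) (Fin 2) ℝ) 0 1
  set c := (s : Matrix (Fin 2) (Fin 2) ℝ) 1 0
  set d := (s : Matrix (Fin 2) (Fin 2) ℝ) 1 1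
  set e := (t : Matrix (Fin 2) (Fin 2) ℝ) 0 0
  set f := (t : Matrix (Fin 2) (Fin 2) ℝ) 0 1
  set p := (t : Matrix (Fin 2) (Fin 2) ℝ) 1 0
  set q := (t : Matrix (Fin 2) (Fin 2) ℝ) 1 1
  nlinarith [sq_nonneg (a * p - b * e), sq_nonneg (a * q - b * f), sq_nonneg (c * p - d * e),
    sq_nonneg (c * q - d * f), sq_nonneg a, sq_nonneg b, sq_nonneg c, sq_nonneg d,
    sq_nonneg e, sq_nonneg f, sq_nonneg p, sq_nonneg q]

lemma Fg_inv (s : SL2R) : Fg s⁻¹ = Fg s := by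
  rw [Matrix.SpecialLinearGroup.SL2_inv_expl s]
  simp only [Fg]
  norm_num
  ring_nf

lemma Fg_one : Fg (1 : SL2R) = Real.sqrt 2 := by
  have h : ((1 : SL2R) : Matrix (Fin 2) (Fin 2) ℝ) = 1 := rfl
  simp only [Fg, h]
  norm_num [Matrix.one_apply]

lemma euclNorm_nonneg (x : ℝ × ℝ) : 0 ≤ euclNorm x := Real.sqrt_nonneg _

lemma abs_fst_le (x : ℝ × ℝ) : |x.1| ≤ euclNorm x := by
  rw [euclNorm, ← Real.sqrt_sq_eq_abs]
  exact Real.sqrt_le_sqrt (by nlinarith [sq_nonneg x.2])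

lemma abs_snd_le (x : ℝ × ℝ) : |x.2| ≤ euclNorm x := by
  rw [euclNorm, ← Real.sqrt_sq_eq_abs]
  exact Real.sqrt_le_sqrt (by nlinarith [sq_nonneg x.1])

lemma euclNorm_pos {x : ℝ × ℝ} (hx : x ≠ 0) : 0 < euclNorm x := by
  rcases eq_or_ne x.1 0 with h1 | h1
  · have h2 : x.2 ≠ 0 := fun h2 => hx (Prod.ext h1 h2)
    calc (0:ℝ) < |x.2| := abs_pos.mpr h2
    _ ≤ _ := abs_snd_le x
  · calc (0:ℝ) < |x.1| := abs_pos.mpr h1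
    _ ≤ _ := abs_fst_le x

lemma euclNorm_rowAct_le (x : ℝ × ℝ) (s : SL2R) :
    euclNorm (rowAct x s) ≤ euclNorm x * Fg s := by
  rw [euclNorm, euclNorm, Fg, ← Real.sqrt_mul (by positivity)]
  apply Real.sqrt_le_sqrt
  simp only [rowAct]
  nlinarith [sq_nonneg (x.1 * (s : Matrix (Fin 2) (Fin 2) ℝ) 1 0 -
      x.2 * (s : Matrix (Fin 2) (Fin 2) ℝ) 0 0),
    sq_nonneg (x.1 * (s : Matrix (Fin 2) (Fin 2) ℝ) 1 1 -
      x.2 * (s : Matrix (Fin 2) (Fin 2) ℝ) 0 1),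
    sq_nonneg x.1, sq_nonneg x.2, sq_nonneg ((s : Matrix (Fin 2) (Fin 2) ℝ) 0 0),
    sq_nonneg ((s : Matrix (Fin 2) (Fin 2) ℝ) 0 1)]

lemma rowAct_one (x : ℝ × ℝ) : rowAct x 1 = x := by
  have h : ((1 : SL2R) : Matrix (Fin 2) (Fin 2) ℝ) = 1 := rfl
  simp [rowAct, h, Matrix.one_apply]

lemma rowAct_mul (x : ℝ × ℝ) (s t : SL2R) :
    rowAct x (s * t) = rowAct (rowAct x s) t := by
  simp only [rowAct, coe_mul_entry]
  exact Prod.ext (by ring) (by ring)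

lemma le_euclNorm_rowAct (x : ℝ × ℝ) (s : SL2R) :
    euclNorm x ≤ euclNorm (rowAct x s) * Fg s := by
  calc euclNorm x = euclNorm (rowAct x (s * s⁻¹)) := by rw [mul_inv_cancel, rowAct_one]
  _ = euclNorm (rowAct (rowAct x s) s⁻¹) := by rw [rowAct_mul]
  _ ≤ euclNorm (rowAct x s) * Fg s⁻¹ := euclNorm_rowAct_le _ _
  _ = euclNorm (rowAct x s) * Fg s := by rw [Fg_inv]

lemma col_sq_le (A : Matrix (Fin 2) (Fin 2) ℝ) (j : Fin 2) :
    A 0 j ^ 2 + A 1 j ^ 2 ≤ ‖A‖ ^ 2 := by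
  have h := Matrix.l2_opNorm_mulVec A ((EuclideanSpace.equiv (Fin 2) ℝ).symm (Pi.single j 1))
  have h1 : ‖(EuclideanSpace.equiv (Fin 2) ℝ).symm (Pi.single j (1:ℝ))‖ = 1 := by
    rw [EuclideanSpace.norm_eq]
    fin_cases j <;> simp [Fin.sum_univ_two, Pi.single_apply]
  have h2 : ‖(EuclideanSpace.equiv (Fin 2) ℝ).symm
      (A *ᵥ (EuclideanSpace.equiv (Fin 2) ℝ).symm (Pi.single j (1:ℝ)))‖
      = Real.sqrt (A 0 j ^ 2 + A 1 j ^ 2) := by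
    rw [EuclideanSpace.norm_eq, Fin.sum_univ_two]
    have hv : ∀ i, ((EuclideanSpace.equiv (Fin 2) ℝ).symm
        (A *ᵥ (EuclideanSpace.equiv (Fin 2) ℝ).symm (Pi.single j (1:ℝ)))) i = A i j := by
      intro i
      show (A.mulVec (Pi.single j 1)) i = A i j
      rw [Matrix.mulVec_single]
      simp
    rw [hv 0, hv 1]
    simp [Real.norm_eq_abs, sq_abs]
  rw [h2, h1, mul_one] at h
  have hE : (0:ℝ) ≤ A 0 j ^ 2 + A 1 j ^ 2 := by positivity
  nlinarith [Real.sq_sqrt hE, Real.sqrt_nonneg (A 0 j ^ 2 + A 1 j ^ 2)]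

lemma Fg_le_opNorm (s : SL2R) : Fg s ≤ 2 * ‖(s : Matrix (Fin 2) (Fin 2) ℝ)‖ := by
  have h0 := col_sq_le (s : Matrix (Fin 2) (Fin 2) ℝ) 0
  have h1 := col_sq_le (s : Matrix (Fin 2) (Fin 2) ℝ) 1
  have hn : (0:ℝ) ≤ ‖(s : Matrix (Fin 2) (Fin 2) ℝ)‖ := norm_nonneg _
  rw [Fg]
  calc Real.sqrt _ ≤ Real.sqrt ((2 * ‖(s : Matrix (Fin 2) (Fin 2) ℝ)‖) ^ 2) := by
        apply Real.sqrt_le_sqrt; nlinarith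
  _ = _ := Real.sqrt_sq (by positivity)

section Meas
variable {α : Type*} [MeasurableSpace α]

lemma measurable_val : Measurable (fun s : SL2R => (s : Matrix (Fin 2) (Fin 2) ℝ)) :=
  measurable_subtype_coe

lemma measurable_entry (i j : Fin 2) :
    Measurable (fun s : SL2R => (s : Matrix (Fin 2) (Fin 2) ℝ) i j) :=
  (measurable_pi_apply j).comp ((measurable_pi_apply i).comp measurable_val)

lemma measurable_Fg : Measurable Fg := by
  refine Real.continuous_sqrt.measurable.comp ?_
  exact ((((measurable_entry 0 0).pow_const 2).add ((measurable_entry 0 1).pow_const 2)).add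
    ((measurable_entry 1 0).pow_const 2)).add ((measurable_entry 1 1).pow_const 2)

lemma measurable_sl2 {f : α → SL2R}
    (h : Measurable fun a => (f a : Matrix (Fin 2) (Fin 2) ℝ)) : Measurable f :=
  Measurable.subtype_mk h

lemma measurable_sl2_entry {f : α → SL2R} (hf : Measurable f) (i j : Fin 2) :
    Measurable (fun a => (f a : Matrix (Fin 2) (Fin 2) ℝ) i j) :=
  (measurable_entry i j).comp hf

lemma measurable_sl2_mul {f h : α → SL2R} (hf : Measurable f) (hh : Measurable h) :
    Measurable (fun a => f a * h a) := by
  apply measurable_sl2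
  apply measurable_pi_lambda
  intro i
  apply measurable_pi_lambda
  intro j
  have : (fun a => ((f a * h a : SL2R) : Matrix (Fin 2) (Fin 2) ℝ) i j)
      = fun a => (f a : Matrix (Fin 2) (Fin 2) ℝ) i 0 * (h a : Matrix (Fin 2) (Fin 2) ℝ) 0 j +
          (f a : Matrix (Fin 2) (Fin 2) ℝ) i 1 * (h a : Matrix (Fin 2) (Fin 2) ℝ) 1 j := by
    funext a
    rw [Matrix.SpecialLinearGroup.coe_mul, Matrix.mul_apply, Fin.sum_univ_two]
  rw [this]
  exact ((measurable_sl2_entry hf i 0).mul (measurable_sl2_entry hh 0 j)).add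
    ((measurable_sl2_entry hf i 1).mul (measurable_sl2_entry hh 1 j))

lemma measurable_piProd {Ω : Type*} [MeasurableSpace Ω] (g : ℕ → Ω → SL2R)
    (hmeas : ∀ j, Measurable (g j)) (n : ℕ) : Measurable (PiProd g n) := by
  induction n with
  | zero => exact measurable_const
  | succ n ih => exact measurable_sl2_mul (hmeas n) ih

lemma measurable_rowAct (x : ℝ × ℝ) : Measurable (fun s : SL2R => rowAct x s) := by
  apply Measurable.prodMk
  · exact (measurable_const.mul (measurable_entry 0 0)).add
      (measurable_const.mul (measurable_entry 1 0))
  · exact (measurable_const.mul (measurable_entry 0 1)).add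
      (measurable_const.mul (measurable_entry 1 1))

end Meas

/-- The key property of elements of `homPolySpace ℓ`. -/
lemma homPoly_prop {ℓ : ℕ} {f : ℝ × ℝ → ℂ} (hf : f ∈ homPolySpace ℓ) :
    Continuous f ∧ ∃ C, 0 ≤ C ∧ ∀ y, ‖f y‖ ≤ C * euclNorm y ^ (2 * ℓ) := by
  induction hf using Submodule.span_induction with
  | mem f hf =>
    obtain ⟨k, rfl⟩ := hf
    constructor
    · exact ((Complex.continuous_ofReal.comp continuous_fst).pow _).mul
        ((Complex.continuous_ofReal.comp continuous_snd).pow _)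
    · refine ⟨1, zero_le_one, fun y => ?_⟩
      rw [one_mul, norm_mul, norm_pow, norm_pow, Complex.norm_real, Complex.norm_real, Real.norm_eq_abs,
        Real.norm_eq_abs]
      have h1 : |y.1| ^ (k:ℕ) ≤ euclNorm y ^ (k:ℕ) :=
        pow_le_pow_left₀ (abs_nonneg _) (abs_fst_le y) _
      have h2 : |y.2| ^ (2*ℓ - (k:ℕ)) ≤ euclNorm y ^ (2*ℓ - (k:ℕ)) :=
        pow_le_pow_left₀ (abs_nonneg _) (abs_snd_le y) _
      calc |y.1| ^ (k:ℕ) * |y.2| ^ (2*ℓ - (k:ℕ))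
          ≤ euclNorm y ^ (k:ℕ) * euclNorm y ^ (2*ℓ - (k:ℕ)) :=
            mul_le_mul h1 h2 (by positivity) (pow_nonneg (euclNorm_nonneg y) _)
      _ = euclNorm y ^ (2*ℓ) := by
            rw [← pow_add]
            congr 1
            omega
  | zero => exact ⟨continuous_const, 0, le_refl _, fun y => by simp⟩
  | add f h hf hh ihf ihh =>
    obtain ⟨hcf, Cf, hCf, hbf⟩ := ihf
    obtain ⟨hch, Ch, hCh, hbh⟩ := ihh
    refine ⟨hcf.add hch, Cf + Ch, by positivity, fun y => ?_⟩
    calc ‖(f + h) y‖ ≤ ‖f y‖ + ‖h y‖ := by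
          rw [Pi.add_apply]; exact norm_add_le _ _
    _ ≤ Cf * euclNorm y ^ (2*ℓ) + Ch * euclNorm y ^ (2*ℓ) := add_le_add (hbf y) (hbh y)
    _ = (Cf + Ch) * euclNorm y ^ (2*ℓ) := by ring
  | smul c f hf ihf =>
    obtain ⟨hcf, Cf, hCf, hbf⟩ := ihf
    refine ⟨(continuous_const (y := c)).mul hcf, ‖c‖ * Cf, by positivity, fun y => ?_⟩
    rw [Pi.smul_apply, smul_eq_mul, norm_mul, mul_assoc]
    exact mul_le_mul_of_nonneg_left (hbf y) (norm_nonneg _)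

section Indep
variable {Ω : Type*} [MeasurableSpace Ω] {μ : Measure Ω} [IsProbabilityMeasure μ]

/-- Product of the values of a tuple indexed by `Finset.range n`. -/
def partialProd : (n : ℕ) → (↥(Finset.range n) → SL2R) → SL2R
  | 0, _ => 1
  | n+1, v => v ⟨n, by simp⟩ *
      partialProd n (fun i => v ⟨i.val, by have := i.prop; simp only [Finset.mem_range] at this ⊢; omega⟩)

lemma measurable_partialProd (n : ℕ) : Measurable (partialProd n) := by
  induction n with
  | zero => exact measurable_const
  | succ n ih =>
    exact measurable_sl2_mul (measurable_pi_apply _)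
      (ih.comp (measurable_pi_lambda _ fun i => measurable_pi_apply _))

lemma partialProd_eq (g : ℕ → Ω → SL2R) (n : ℕ) (ω : Ω) :
    partialProd n (fun i : ↥(Finset.range n) => g i.val ω) = PiProd g n ω := by
  induction n with
  | zero => rfl
  | succ n ih => rw [partialProd, PiProd, ih]

lemma indep_piProd (g : ℕ → Ω → SL2R) (hmeas : ∀ j, Measurable (g j))
    (hindep : iIndepFun (m := fun _ : ℕ => (inferInstance : MeasurableSpace SL2R)) g μ) (n : ℕ) :
    IndepFun (g n) (PiProd g n) μ := by
  have h := hindep.indepFun_finset {n} (Finset.range n) (by simp) hmeas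
  have h2 := h.comp (φ := fun v : (({n} : Finset ℕ) : Type) → SL2R =>
      v ⟨n, Finset.mem_singleton_self n⟩)
    (ψ := partialProd n)
    (measurable_pi_apply _ : Measurable (fun v : (({n} : Finset ℕ) : Type) → SL2R =>
      v ⟨n, Finset.mem_singleton_self n⟩))
    (measurable_partialProd n)
  have e1 : ((fun v : (({n} : Finset ℕ) : Type) → SL2R => v ⟨n, Finset.mem_singleton_self n⟩) ∘
      (fun a (i : ({n} : Finset ℕ)) => g i a)) = g n := rfl
  have e2 : (partialProd n ∘ (fun a (i : ↥(Finset.range n)) => g i a)) = PiProd g n :=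
    funext fun ω => partialProd_eq g n ω
  rwa [e1, e2] at h2

end Indep

section Int
variable {Ω : Type*} [MeasurableSpace Ω] {μ : Measure Ω} [IsProbabilityMeasure μ]
  {ℓ : ℕ} {g : ℕ → Ω → SL2R}

lemma intFg0 (hmeas : ∀ j, Measurable (g j))
    (hmom : Integrable (fun ω => ‖(g 0 ω : Matrix (Fin 2) (Fin 2) ℝ)‖ ^ (2 * ℓ)) μ) :
    Integrable (fun ω => Fg (g 0 ω) ^ (2 * ℓ)) μ := by
  apply Integrable.mono' (hmom.const_mul (2 ^ (2 * ℓ)))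
  · exact ((measurable_Fg.comp (hmeas 0)).pow_const _).aestronglyMeasurable
  · refine Filter.Eventually.of_forall fun ω => ?_
    rw [Real.norm_eq_abs, abs_of_nonneg (pow_nonneg (Fg_nonneg _) _)]
    calc Fg (g 0 ω) ^ (2*ℓ) ≤ (2 * ‖(g 0 ω : Matrix (Fin 2) (Fin 2) ℝ)‖) ^ (2*ℓ) :=
          pow_le_pow_left₀ (Fg_nonneg _) (Fg_le_opNorm _) _
    _ = 2 ^ (2*ℓ) * ‖(g 0 ω : Matrix (Fin 2) (Fin 2) ℝ)‖ ^ (2*ℓ) := mul_pow _ _ _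

lemma intFgj (hmeas : ∀ j, Measurable (g j)) (hid : ∀ j, IdentDistrib (g j) (g 0) μ μ)
    (hmom : Integrable (fun ω => ‖(g 0 ω : Matrix (Fin 2) (Fin 2) ℝ)‖ ^ (2 * ℓ)) μ) (j : ℕ) :
    Integrable (fun ω => Fg (g j ω) ^ (2 * ℓ)) μ :=
  (((hid j).comp (measurable_Fg.pow_const (2*ℓ))).integrable_iff).mpr (intFg0 hmeas hmom)

lemma intW (hmeas : ∀ j, Measurable (g j))
    (hindep : iIndepFun (m := fun _ : ℕ => (inferInstance : MeasurableSpace SL2R)) g μ)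
    (hid : ∀ j, IdentDistrib (g j) (g 0) μ μ)
    (hmom : Integrable (fun ω => ‖(g 0 ω : Matrix (Fin 2) (Fin 2) ℝ)‖ ^ (2 * ℓ)) μ) (n : ℕ) :
    Integrable (fun ω => Fg (PiProd g n ω) ^ (2 * ℓ)) μ := by
  induction n with
  | zero =>
    have : (fun ω => Fg (PiProd g 0 ω) ^ (2 * ℓ)) = fun _ : Ω => Fg 1 ^ (2*ℓ) := rfl
    rw [this]
    exact integrable_const _
  | succ n ih =>
    have hι := (indep_piProd g hmeas hindep n).comp
      (measurable_Fg.pow_const (2*ℓ)) (measurable_Fg.pow_const (2*ℓ))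
    have hmul := hι.integrable_mul (intFgj hmeas hid hmom n) ih
    apply Integrable.mono' hmul
    · exact ((measurable_Fg.comp (measurable_piProd g hmeas (n+1))).pow_const _).aestronglyMeasurable
    · refine Filter.Eventually.of_forall fun ω => ?_
      rw [Real.norm_eq_abs, abs_of_nonneg (pow_nonneg (Fg_nonneg _) _)]
      show Fg (g n ω * PiProd g n ω) ^ (2*ℓ) ≤ _
      calc Fg (g n ω * PiProd g n ω) ^ (2*ℓ)
          ≤ (Fg (g n ω) * Fg (PiProd g n ω)) ^ (2*ℓ) :=
            pow_le_pow_left₀ (Fg_nonneg _) (Fg_mul_le _ _) _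
      _ = Fg (g n ω) ^ (2*ℓ) * Fg (PiProd g n ω) ^ (2*ℓ) := mul_pow _ _ _

lemma measurable_euclNorm : Continuous euclNorm :=
  Real.continuous_sqrt.comp ((continuous_fst.pow 2).add (continuous_snd.pow 2))

lemma intEucl (hmeas : ∀ j, Measurable (g j))
    (hindep : iIndepFun (m := fun _ : ℕ => (inferInstance : MeasurableSpace SL2R)) g μ)
    (hid : ∀ j, IdentDistrib (g j) (g 0) μ μ)
    (hmom : Integrable (fun ω => ‖(g 0 ω : Matrix (Fin 2) (Fin 2) ℝ)‖ ^ (2 * ℓ)) μ)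
    (x : ℝ × ℝ) (n : ℕ) :
    Integrable (fun ω => euclNorm (rowAct x (PiProd g n ω)) ^ (2 * ℓ)) μ := by
  apply Integrable.mono' ((intW hmeas hindep hid hmom n).const_mul (euclNorm x ^ (2*ℓ)))
  · exact (measurable_euclNorm.measurable.comp
      ((measurable_rowAct x).comp (measurable_piProd g hmeas n))).pow_const _
      |>.aestronglyMeasurable
  · refine Filter.Eventually.of_forall fun ω => ?_
    rw [Real.norm_eq_abs, abs_of_nonneg (pow_nonneg (euclNorm_nonneg _) _)]
    calc euclNorm (rowAct x (PiProd g n ω)) ^ (2*ℓ)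
        ≤ (euclNorm x * Fg (PiProd g n ω)) ^ (2*ℓ) :=
          pow_le_pow_left₀ (euclNorm_nonneg _) (euclNorm_rowAct_le _ _) _
    _ = euclNorm x ^ (2*ℓ) * Fg (PiProd g n ω) ^ (2*ℓ) := mul_pow _ _ _

lemma intPoly (hmeas : ∀ j, Measurable (g j))
    (hindep : iIndepFun (m := fun _ : ℕ => (inferInstance : MeasurableSpace SL2R)) g μ)
    (hid : ∀ j, IdentDistrib (g j) (g 0) μ μ)
    (hmom : Integrable (fun ω => ‖(g 0 ω : Matrix (Fin 2) (Fin 2) ℝ)‖ ^ (2 * ℓ)) μ)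
    {f : ℝ × ℝ → ℂ} (hf : f ∈ homPolySpace ℓ) (x : ℝ × ℝ) (n : ℕ) :
    Integrable (fun ω => f (rowAct x (PiProd g n ω))) μ := by
  obtain ⟨hcont, C, hC, hbound⟩ := homPoly_prop hf
  apply Integrable.mono' (((intW hmeas hindep hid hmom n).const_mul (C * euclNorm x ^ (2*ℓ))))
  · exact (hcont.measurable.comp
      ((measurable_rowAct x).comp (measurable_piProd g hmeas n))).aestronglyMeasurable
  · refine Filter.Eventually.of_forall fun ω => ?_
    calc ‖f (rowAct x (PiProd g n ω))‖ = ‖f (rowAct x (PiProd g n ω))‖ := rfl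
    _ ≤ C * euclNorm (rowAct x (PiProd g n ω)) ^ (2*ℓ) := hbound _
    _ ≤ C * (euclNorm x ^ (2*ℓ) * Fg (PiProd g n ω) ^ (2*ℓ)) := by
        refine mul_le_mul_of_nonneg_left ?_ hC
        calc euclNorm (rowAct x (PiProd g n ω)) ^ (2*ℓ)
            ≤ (euclNorm x * Fg (PiProd g n ω)) ^ (2*ℓ) :=
              pow_le_pow_left₀ (euclNorm_nonneg _) (euclNorm_rowAct_le _ _) _
        _ = _ := mul_pow _ _ _
    _ = C * euclNorm x ^ (2*ℓ) * Fg (PiProd g n ω) ^ (2*ℓ) := by ring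

end Int

lemma Nmem (ℓ : ℕ) :
    (fun y : ℝ × ℝ => ((y.1:ℂ)^2 + (y.2:ℂ)^2)^ℓ) ∈ homPolySpace ℓ := by
  have hrepr : (fun y : ℝ × ℝ => ((y.1:ℂ)^2 + (y.2:ℂ)^2)^ℓ)
      = ∑ i ∈ Finset.range (ℓ+1), (Nat.choose ℓ i : ℂ) •
          (fun y : ℝ × ℝ => (y.1:ℂ)^(2*i) * (y.2:ℂ)^(2*ℓ - 2*i)) := by
    funext y
    rw [Finset.sum_apply, add_pow]
    refine Finset.sum_congr rfl fun i hi => ?_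
    have hi' : i ≤ ℓ := Nat.lt_succ_iff.mp (Finset.mem_range.mp hi)
    have h2 : 2*ℓ - 2*i = 2*(ℓ-i) := by omega
    rw [Pi.smul_apply, smul_eq_mul, h2, pow_mul, pow_mul]
    ring
  rw [hrepr]
  refine Submodule.sum_mem _ fun i hi => Submodule.smul_mem _ _ (Submodule.subset_span ?_)
  have hi' : i ≤ ℓ := Nat.lt_succ_iff.mp (Finset.mem_range.mp hi)
  exact ⟨⟨2*i, by omega⟩, rfl⟩

lemma euclNorm_pow_eq (ℓ : ℕ) (y : ℝ × ℝ) :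
    ((euclNorm y ^ (2*ℓ) : ℝ) : ℂ) = ((y.1:ℂ)^2 + (y.2:ℂ)^2)^ℓ := by
  have h : euclNorm y ^ (2*ℓ) = (y.1^2 + y.2^2)^ℓ := by
    rw [euclNorm, pow_mul, Real.sq_sqrt (by positivity)]
  rw [h]
  push_cast
  ring

section Key
variable {Ω : Type*} [MeasurableSpace Ω] {μ : Measure Ω} [IsProbabilityMeasure μ]
  {ℓ : ℕ} {g : ℕ → Ω → SL2R}

lemma measurable_rowAct_pair (x : ℝ × ℝ) :
    Measurable fun p : SL2R × SL2R => rowAct (rowAct x p.1) p.2 := by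
  have m1 : Measurable fun p : SL2R × SL2R => rowAct x p.1 :=
    (measurable_rowAct x).comp measurable_fst
  refine Measurable.prodMk ?_ ?_
  · exact (m1.fst.mul ((measurable_entry 0 0).comp measurable_snd)).add
      (m1.snd.mul ((measurable_entry 1 0).comp measurable_snd))
  · exact (m1.fst.mul ((measurable_entry 0 1).comp measurable_snd)).add
      (m1.snd.mul ((measurable_entry 1 1).comp measurable_snd))

lemma key_identity (hmeas : ∀ j, Measurable (g j))
    (hindep : iIndepFun (m := fun _ : ℕ => (inferInstance : MeasurableSpace SL2R)) g μ)
    (hid : ∀ j, IdentDistrib (g j) (g 0) μ μ)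
    (hmom : Integrable (fun ω => ‖(g 0 ω : Matrix (Fin 2) (Fin 2) ℝ)‖ ^ (2 * ℓ)) μ)
    (T : Module.End ℂ (homPolySpace ℓ))
    (hT : ∀ (v : homPolySpace ℓ) (x : ℝ × ℝ),
      (T v : ℝ × ℝ → ℂ) x = ∫ ω, (v : ℝ × ℝ → ℂ) (rowAct x (g 0 ω)) ∂μ)
    (n : ℕ) (v : homPolySpace ℓ) (x : ℝ × ℝ) :
    ∫ ω, (v : ℝ × ℝ → ℂ) (rowAct x (PiProd g n ω)) ∂μ = ((T ^ n) v : ℝ × ℝ → ℂ) x := by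
  induction n generalizing v x with
  | zero =>
    have h0 : ∀ ω : Ω, rowAct x (PiProd g 0 ω) = x := fun ω => rowAct_one x
    simp only [h0, pow_zero, Module.End.one_apply]
    simp [measure_univ]
  | succ n ih =>
    obtain ⟨hcont, C, hC, hbound⟩ := homPoly_prop v.2
    set ν1 := μ.map (g n) with hν1
    set ν2 := μ.map (PiProd g n) with hν2
    haveI : IsProbabilityMeasure ν1 := Measure.isProbabilityMeasure_map (hmeas n).aemeasurable
    haveI : IsProbabilityMeasure ν2 :=
      Measure.isProbabilityMeasure_map (measurable_piProd g hmeas n).aemeasurable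
    set h : SL2R × SL2R → ℂ := fun p => (v : ℝ × ℝ → ℂ) (rowAct (rowAct x p.1) p.2) with hh
    have hmeash : Measurable h := hcont.measurable.comp (measurable_rowAct_pair x)
    have hpair : μ.map (fun ω => (g n ω, PiProd g n ω)) = ν1.prod ν2 :=
      (indepFun_iff_map_prod_eq_prod_map_map (hmeas n).aemeasurable
        (measurable_piProd g hmeas n).aemeasurable).mp (indep_piProd g hmeas hindep n)
    have int1 : Integrable (fun s : SL2R => Fg s ^ (2*ℓ)) ν1 := by
      rw [hν1, integrable_map_measure (((measurable_Fg.pow_const (2*ℓ))).aestronglyMeasurable)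
        (hmeas n).aemeasurable]
      exact intFgj hmeas hid hmom n
    have int2 : Integrable (fun s : SL2R => Fg s ^ (2*ℓ)) ν2 := by
      rw [hν2, integrable_map_measure (((measurable_Fg.pow_const (2*ℓ))).aestronglyMeasurable)
        (measurable_piProd g hmeas n).aemeasurable]
      exact intW hmeas hindep hid hmom n
    have hint : Integrable h (ν1.prod ν2) := by
      apply Integrable.mono' ((int1.mul_prod int2).const_mul (C * euclNorm x ^ (2*ℓ)))
      · exact hmeash.aestronglyMeasurable
      · refine Filter.Eventually.of_forall fun p => ?_
        have e1 : euclNorm (rowAct (rowAct x p.1) p.2) ≤ euclNorm x * Fg p.1 * Fg p.2 := by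
          calc euclNorm (rowAct (rowAct x p.1) p.2) ≤ euclNorm (rowAct x p.1) * Fg p.2 :=
                euclNorm_rowAct_le _ _
          _ ≤ euclNorm x * Fg p.1 * Fg p.2 :=
                mul_le_mul_of_nonneg_right (euclNorm_rowAct_le _ _) (Fg_nonneg _)
        calc ‖h p‖ ≤ C * euclNorm (rowAct (rowAct x p.1) p.2) ^ (2*ℓ) := hbound _
        _ ≤ C * (euclNorm x * Fg p.1 * Fg p.2) ^ (2*ℓ) := by
            refine mul_le_mul_of_nonneg_left (pow_le_pow_left₀ (euclNorm_nonneg _) e1 _) hC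
        _ = C * euclNorm x ^ (2*ℓ) * (Fg p.1 ^ (2*ℓ) * Fg p.2 ^ (2*ℓ)) := by
            rw [mul_pow, mul_pow]; ring
    have humeas : Measurable fun s : SL2R => (((T ^ n) v : homPolySpace ℓ) : ℝ × ℝ → ℂ)
        (rowAct x s) := (homPoly_prop ((T ^ n) v).2).1.measurable.comp (measurable_rowAct x)
    calc ∫ ω, (v : ℝ × ℝ → ℂ) (rowAct x (PiProd g (n+1) ω)) ∂μ
        = ∫ ω, h (g n ω, PiProd g n ω) ∂μ := by
          refine integral_congr_ae (Filter.Eventually.of_forall fun ω => ?_)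
          show (v : ℝ × ℝ → ℂ) (rowAct x (g n ω * PiProd g n ω)) = _
          rw [rowAct_mul, hh]
    _ = ∫ p, h p ∂(μ.map (fun ω => (g n ω, PiProd g n ω))) :=
          (integral_map ((hmeas n).aemeasurable.prodMk
            (measurable_piProd g hmeas n).aemeasurable) hmeash.aestronglyMeasurable).symm
    _ = ∫ p, h p ∂(ν1.prod ν2) := by rw [hpair]
    _ = ∫ s, ∫ t, h (s, t) ∂ν2 ∂ν1 := integral_prod h hint
    _ = ∫ s, (((T ^ n) v : homPolySpace ℓ) : ℝ × ℝ → ℂ) (rowAct x s) ∂ν1 := by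
          refine integral_congr_ae (Filter.Eventually.of_forall fun s => ?_)
          dsimp only
          have : ∫ t, h (s, t) ∂ν2
              = ∫ ω, (v : ℝ × ℝ → ℂ) (rowAct (rowAct x s) (PiProd g n ω)) ∂μ := by
            rw [hν2]
            exact integral_map (measurable_piProd g hmeas n).aemeasurable
              (hcont.measurable.comp (measurable_rowAct (rowAct x s))).aestronglyMeasurable
          rw [this, ih v (rowAct x s)]
    _ = ∫ ω, (((T ^ n) v : homPolySpace ℓ) : ℝ × ℝ → ℂ) (rowAct x (g n ω)) ∂μ := by
          rw [hν1]
          exact integral_map (hmeas n).aemeasurable humeas.aestronglyMeasurable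
    _ = ∫ ω, (((T ^ n) v : homPolySpace ℓ) : ℝ × ℝ → ℂ) (rowAct x (g 0 ω)) ∂μ := by
          have hident := (hid n).comp
            (u := fun s : SL2R => (((T ^ n) v : homPolySpace ℓ) : ℝ × ℝ → ℂ) (rowAct x s)) humeas
          exact hident.integral_eq
    _ = (T ((T ^ n) v) : ℝ × ℝ → ℂ) x := (hT _ x).symm
    _ = ((T ^ (n+1)) v : ℝ × ℝ → ℂ) x := by rw [pow_succ']; rfl

end Key

lemma homPolySpace_fd (ℓ : ℕ) : FiniteDimensional ℂ (homPolySpace ℓ) := by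
  have h : homPolySpace ℓ = Submodule.span ℂ (Set.range fun k : Fin (2*ℓ+1) =>
      (fun x : ℝ × ℝ => (x.1:ℂ)^(k:ℕ) * (x.2:ℂ)^(2*ℓ-(k:ℕ)))) := by
    unfold homPolySpace
    congr 1
    ext f
    exact ⟨fun ⟨k, h⟩ => ⟨k, h.symm⟩, fun ⟨k, h⟩ => ⟨k, h.symm⟩⟩
  rw [h]
  exact FiniteDimensional.span_of_finite ℂ (Set.finite_range _)

lemma spectral_growth {ℓ : ℕ} (T : Module.End ℂ (homPolySpace ℓ)) (ρ : ℝ) (hρpos : 0 < ρ)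
    (hub : ∀ c : ℂ, Module.End.HasEigenvalue T c → ‖c‖ ≤ ρ)
    (v : homPolySpace ℓ) (x : ℝ × ℝ) {r : ℝ} (hr : ρ < r) :
    ∃ K > 0, ∀ᶠ n in Filter.atTop, ‖((T^n) v : ℝ × ℝ → ℂ) x‖ ≤ K * r^n := by
  haveI := homPolySpace_fd ℓ
  set d := Module.finrank ℂ (homPolySpace ℓ) with hd
  set e : homPolySpace ℓ ≃ₗ[ℂ] (Fin d → ℂ) := (Module.finBasis ℂ (homPolySpace ℓ)).equivFun with he
  set S : Module.End ℂ (Fin d → ℂ) := e.conj T with hS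
  set Sc : (Fin d → ℂ) →L[ℂ] (Fin d → ℂ) := LinearMap.toContinuousLinearMap S with hSc
  have hScS : ∀ y, Sc y = S y := fun y => rfl
  have hpow : ∀ (n : ℕ) (w : homPolySpace ℓ), (T^n) w = e.symm ((Sc^n) (e w)) := by
    intro n
    induction n with
    | zero => intro w; simp
    | succ n ih =>
      intro w
      rw [pow_succ', Module.End.mul_apply, ih, pow_succ', ContinuousLinearMap.mul_apply, hScS,
        hS, LinearEquiv.conj_apply]
      simp
  -- spectrum bound
  have hspec : ∀ k ∈ spectrum ℂ Sc, ‖k‖ ≤ ρ := by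
    intro k hk
    have hkS : Module.End.HasEigenvalue S k := by
      by_contra hcon
      rw [Module.End.hasEigenvalue_iff_mem_spectrum, spectrum.notMem_iff] at hcon
      obtain ⟨u, hu⟩ := hcon
      apply spectrum.mem_iff.mp hk
      refine ⟨⟨LinearMap.toContinuousLinearMap u.val, LinearMap.toContinuousLinearMap ↑u⁻¹,
        ?_, ?_⟩, ?_⟩
      · refine ContinuousLinearMap.ext fun y => ?_
        rw [ContinuousLinearMap.mul_apply, ContinuousLinearMap.one_apply]
        show (u.val) ((↑u⁻¹ : Module.End ℂ (Fin d → ℂ)) y) = y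
        rw [← Module.End.mul_apply, u.mul_inv, Module.End.one_apply]
      · refine ContinuousLinearMap.ext fun y => ?_
        rw [ContinuousLinearMap.mul_apply, ContinuousLinearMap.one_apply]
        show (↑u⁻¹ : Module.End ℂ (Fin d → ℂ)) (u.val y) = y
        rw [← Module.End.mul_apply, u.inv_mul, Module.End.one_apply]
      · refine ContinuousLinearMap.ext fun y => ?_
        show u.val y = _
        rw [hu]
        simp only [LinearMap.sub_apply, ContinuousLinearMap.sub_apply,
          Module.algebraMap_end_apply, Algebra.algebraMap_eq_smul_one,
          ContinuousLinearMap.smul_apply, ContinuousLinearMap.one_apply]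
        rfl
    -- transfer to T
    obtain ⟨w, hw⟩ := hkS.exists_hasEigenvector
    have hTw : T (e.symm w) = k • e.symm w := by
      have h1 : S w = k • w := Module.End.mem_eigenspace_iff.mp hw.1
      have h2 : e (T (e.symm w)) = S w := by rw [hS, LinearEquiv.conj_apply]; simp
      rw [h1] at h2
      calc T (e.symm w) = e.symm (e (T (e.symm w))) := by simp
      _ = e.symm (k • w) := by rw [h2]
      _ = k • e.symm w := by simp
    have hne : e.symm w ≠ 0 := by
      simp only [ne_eq, EmbeddingLike.map_eq_zero_iff]
      exact hw.2
    exact hub k (Module.End.hasEigenvalue_of_hasEigenvector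
      ⟨Module.End.mem_eigenspace_iff.mpr hTw, hne⟩)
  have hrad : spectralRadius ℂ Sc ≤ ENNReal.ofReal ρ := by
    rw [spectralRadius]
    refine iSup₂_le fun k hk => ?_
    have := hspec k hk
    rw [ENNReal.ofReal]
    rw [ENNReal.coe_le_coe]
    rw [← NNReal.coe_le_coe]
    rw [Real.coe_toNNReal _ hρpos.le]
    rwa [coe_nnnorm]
  have htend := spectrum.pow_nnnorm_pow_one_div_tendsto_nhds_spectralRadius Sc
  have hofr : spectralRadius ℂ Sc < ENNReal.ofReal r :=
    lt_of_le_of_lt hrad ((ENNReal.ofReal_lt_ofReal_iff (hρpos.trans hr)).mpr hr)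
  have hr0 : (0:ℝ) < r := hρpos.trans hr
  have hev := htend.eventually_lt_const hofr
  have hnorm : ∀ᶠ n in atTop, ‖Sc^n‖ ≤ r^n := by
    filter_upwards [hev, eventually_ge_atTop 1] with n h1 h2
    have hn0 : (n:ℝ) ≠ 0 := Nat.cast_ne_zero.mpr (by omega)
    have h3 : ((‖Sc^n‖₊ : ℝ≥0∞) ^ (1/(n:ℝ))) ^ (n:ℝ) ≤ (ENNReal.ofReal r) ^ (n:ℝ) :=
      ENNReal.rpow_le_rpow h1.le (by positivity)
    rw [← ENNReal.rpow_mul, one_div, inv_mul_cancel₀ hn0, ENNReal.rpow_one,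
      ENNReal.rpow_natCast, ← ENNReal.ofReal_pow hr0.le] at h3
    have h4 := (ENNReal.le_ofReal_iff_toReal_le (by simp) (by positivity)).mp h3
    simpa using h4
  set ψ : (Fin d → ℂ) →L[ℂ] ℂ := LinearMap.toContinuousLinearMap
      (((LinearMap.proj x).comp (homPolySpace ℓ).subtype).comp e.symm.toLinearMap) with hψ
  have heval : ∀ n : ℕ, ((T^n) v : ℝ × ℝ → ℂ) x = ψ ((Sc^n) (e v)) := fun n => by
    rw [hpow n v]; rfl
  refine ⟨‖ψ‖ * ‖e v‖ + 1, by positivity, ?_⟩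
  filter_upwards [hnorm] with n hn
  rw [heval n]
  have hrn : (0:ℝ) ≤ r^n := by positivity
  calc ‖ψ ((Sc^n) (e v))‖ = ‖ψ ((Sc^n) (e v))‖ := rfl
  _ ≤ ‖ψ‖ * ‖(Sc^n) (e v)‖ := ψ.le_opNorm _
  _ ≤ ‖ψ‖ * (‖Sc^n‖ * ‖e v‖) :=
      mul_le_mul_of_nonneg_left ((Sc^n).le_opNorm _) (norm_nonneg ψ)
  _ ≤ ‖ψ‖ * (r^n * ‖e v‖) := by
      refine mul_le_mul_of_nonneg_left ?_ (norm_nonneg ψ)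
      exact mul_le_mul_of_nonneg_right hn (norm_nonneg _)
  _ = (‖ψ‖ * ‖e v‖) * r^n := by ring
  _ ≤ (‖ψ‖ * ‖e v‖ + 1) * r^n := by nlinarith



lemma tangent_ineq {w c : ℝ} (hw : 1 ≤ w) (hc : 0 < c) : 2 / c - w / c^2 ≤ w⁻¹ := by
  have hw0 : (0:ℝ) < w := lt_of_lt_of_le one_pos hw
  have h : 1/w - (2/c - w/c^2) = (c-w)^2/(w*c^2) := by field_simp; ring
  have h2 : (0:ℝ) ≤ (c-w)^2/(w*c^2) := by positivity
  rw [inv_eq_one_div]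
  linarith


set_option maxHeartbeats 2000000 in
/-- if `𝒯_ℓ` is the transfer operator `v ↦ (x ↦ E[v(x·g₁)])` on the space of
homogeneous polynomial functions of degree `2ℓ`, and `ρ(𝒯_ℓ) > 0` is the maximum modulus
of its eigenvalues, then for every `x ≠ 0`,
`limsup_n (1/n)·ln E(‖x·Π_n‖^{2ℓ}) ≤ ln ρ(𝒯_ℓ)` (Euclidean norm on `ℝ²`). -/
theorem stmt8 {Ω : Type*} [MeasurableSpace Ω] (μ : Measure Ω) [IsProbabilityMeasure μ]
    (ℓ : ℕ) (g : ℕ → Ω → SL2R) (hmeas : ∀ j, Measurable (g j))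
    (hindep : iIndepFun (m := fun _ : ℕ => (inferInstance : MeasurableSpace SL2R)) g μ)
    (hid : ∀ j, IdentDistrib (g j) (g 0) μ μ)
    (hmom : Integrable (fun ω => ‖(g 0 ω : Matrix (Fin 2) (Fin 2) ℝ)‖ ^ (2 * ℓ)) μ)
    (T : Module.End ℂ (homPolySpace ℓ))
    (hT : ∀ (v : homPolySpace ℓ) (x : ℝ × ℝ),
      (T v : ℝ × ℝ → ℂ) x = ∫ ω, (v : ℝ × ℝ → ℂ) (rowAct x (g 0 ω)) ∂μ)
    (ρ : ℝ) (hρpos : 0 < ρ)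
    (hρ : IsGreatest {r : ℝ | ∃ c : ℂ, Module.End.HasEigenvalue T c ∧ r = ‖c‖} ρ) :
    ∀ x : ℝ × ℝ, x ≠ 0 →
      Filter.limsup
        (fun n : ℕ =>
          (1 / (n : ℝ)) *
            Real.log (∫ ω, euclNorm (rowAct x (PiProd g n ω)) ^ (2 * ℓ) ∂μ))
        Filter.atTop ≤ Real.log ρ := by
  intro x hx
  set a : ℕ → ℝ := fun n => ∫ ω, euclNorm (rowAct x (PiProd g n ω)) ^ (2 * ℓ) ∂μ with haa
  set Nv : homPolySpace ℓ := ⟨fun y : ℝ × ℝ => ((y.1:ℂ)^2 + (y.2:ℂ)^2)^ℓ, Nmem ℓ⟩ with hNv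
  -- the complex representation of a n
  have ha : ∀ n, (a n : ℂ) = ((T ^ n) Nv : ℝ × ℝ → ℂ) x := by
    intro n
    rw [haa]
    calc ((∫ ω, euclNorm (rowAct x (PiProd g n ω)) ^ (2 * ℓ) ∂μ : ℝ) : ℂ)
        = ∫ ω, ((euclNorm (rowAct x (PiProd g n ω)) ^ (2 * ℓ) : ℝ) : ℂ) ∂μ :=
          (integral_ofReal).symm
    _ = ∫ ω, (Nv : ℝ × ℝ → ℂ) (rowAct x (PiProd g n ω)) ∂μ := by
          refine integral_congr_ae (Filter.Eventually.of_forall fun ω => ?_)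
          exact euclNorm_pow_eq ℓ _
    _ = ((T ^ n) Nv : ℝ × ℝ → ℂ) x := key_identity hmeas hindep hid hmom T hT n Nv x
  -- lower bound
  set B : ℝ := ∫ ω, Fg (g 0 ω) ^ (2 * ℓ) ∂μ with hB
  have hB1 : 1 ≤ B := by
    calc (1:ℝ) = ∫ _ω, (1:ℝ) ∂μ := by simp
    _ ≤ B := integral_mono (integrable_const 1) (intFg0 hmeas hmom)
        (fun ω => one_le_pow₀ (one_le_Fg _))
  have hB0 : 0 < B := lt_of_lt_of_le one_pos hB1
  set b : ℕ → ℝ := fun n => ∫ ω, Fg (PiProd g n ω) ^ (2 * ℓ) ∂μ with hbb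
  have hb1 : ∀ n, 1 ≤ b n := by
    intro n
    calc (1:ℝ) = ∫ _ω, (1:ℝ) ∂μ := by simp
    _ ≤ b n := integral_mono (integrable_const 1) (intW hmeas hindep hid hmom n)
        (fun ω => one_le_pow₀ (one_le_Fg _))
  have hbpos : ∀ n, 0 < b n := fun n => lt_of_lt_of_le one_pos (hb1 n)
  have hbB : ∀ n, b n ≤ 2 ^ ℓ * B ^ n := by
    intro n
    induction n with
    | zero =>
      have h0 : b 0 = 2 ^ ℓ := by
        show ∫ ω, Fg (PiProd g 0 ω) ^ (2 * ℓ) ∂μ = 2 ^ ℓ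
        have : (fun ω : Ω => Fg (PiProd g 0 ω) ^ (2 * ℓ)) = fun _ : Ω => (2:ℝ) ^ ℓ := by
          funext ω
          show Fg 1 ^ (2 * ℓ) = (2:ℝ) ^ ℓ
          rw [Fg_one, pow_mul, Real.sq_sqrt (by norm_num)]
        rw [this]
        simp
      simp [h0]
    | succ n ih =>
      have hι := (indep_piProd g hmeas hindep n).comp
        (measurable_Fg.pow_const (2*ℓ)) (measurable_Fg.pow_const (2*ℓ))
      have hmul := hι.integrable_mul (intFgj hmeas hid hmom n) (intW hmeas hindep hid hmom n)
      have h1 : b (n+1) ≤ ∫ ω, Fg (g n ω) ^ (2*ℓ) * Fg (PiProd g n ω) ^ (2*ℓ) ∂μ := by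
        refine integral_mono (intW hmeas hindep hid hmom (n+1)) hmul fun ω => ?_
        show Fg (g n ω * PiProd g n ω) ^ (2*ℓ) ≤ _
        calc Fg (g n ω * PiProd g n ω) ^ (2*ℓ)
            ≤ (Fg (g n ω) * Fg (PiProd g n ω)) ^ (2*ℓ) :=
              pow_le_pow_left₀ (Fg_nonneg _) (Fg_mul_le _ _) _
        _ = _ := mul_pow _ _ _
      have h2 : ∫ ω, Fg (g n ω) ^ (2*ℓ) * Fg (PiProd g n ω) ^ (2*ℓ) ∂μ = B * b n := by
        have h3 := hι.integral_fun_mul_eq_mul_integral (intFgj hmeas hid hmom n).aestronglyMeasurable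
          (intW hmeas hindep hid hmom n).aestronglyMeasurable
        have h4 : ∫ ω, Fg (g n ω) ^ (2*ℓ) ∂μ = B :=
          ((hid n).comp (measurable_Fg.pow_const (2*ℓ))).integral_eq
        calc ∫ ω, Fg (g n ω) ^ (2*ℓ) * Fg (PiProd g n ω) ^ (2*ℓ) ∂μ
            = (∫ ω, Fg (g n ω) ^ (2*ℓ) ∂μ) * (∫ ω, Fg (PiProd g n ω) ^ (2*ℓ) ∂μ) := h3
        _ = B * b n := by rw [h4]
      calc b (n+1) ≤ B * b n := h2 ▸ h1
      _ ≤ B * (2 ^ ℓ * B ^ n) := mul_le_mul_of_nonneg_left ih hB0.le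
      _ = 2 ^ ℓ * B ^ (n+1) := by ring
  -- inverse moments
  have hWmeas : ∀ n, Measurable (fun ω => Fg (PiProd g n ω) ^ (2*ℓ)) := fun n =>
    (measurable_Fg.comp (measurable_piProd g hmeas n)).pow_const _
  have hintInv : ∀ n, Integrable (fun ω => (Fg (PiProd g n ω) ^ (2*ℓ))⁻¹) μ := by
    intro n
    apply Integrable.mono' (integrable_const (1:ℝ))
    · exact (hWmeas n).inv.aestronglyMeasurable
    · refine Filter.Eventually.of_forall fun ω => ?_
      have hW1 : 1 ≤ Fg (PiProd g n ω) ^ (2*ℓ) := one_le_pow₀ (one_le_Fg _)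
      rw [Real.norm_eq_abs, abs_of_nonneg (by positivity)]
      exact inv_le_one_of_one_le₀ hW1
  have hinvb : ∀ n, 1 / b n ≤ ∫ ω, (Fg (PiProd g n ω) ^ (2*ℓ))⁻¹ ∂μ := by
    intro n
    have htang : ∀ ω, 2 / b n - Fg (PiProd g n ω) ^ (2*ℓ) / (b n)^2
        ≤ (Fg (PiProd g n ω) ^ (2*ℓ))⁻¹ := by
      intro ω
      exact tangent_ineq (one_le_pow₀ (one_le_Fg _)) (hbpos n)
    have hii : Integrable (fun ω => 2 / b n - Fg (PiProd g n ω) ^ (2*ℓ) / (b n)^2) μ :=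
      (integrable_const _).sub ((intW hmeas hindep hid hmom n).div_const _)
    have h5 := integral_mono hii (hintInv n) htang
    have h6 : ∫ ω, (2 / b n - Fg (PiProd g n ω) ^ (2*ℓ) / (b n)^2) ∂μ = 1 / b n := by
      rw [integral_sub (integrable_const _) ((intW hmeas hindep hid hmom n).div_const _),
        integral_const, integral_div]
      have hbn : (∫ ω, Fg (PiProd g n ω) ^ (2*ℓ) ∂μ) = b n := rfl
      rw [hbn]
      simp only [probReal_univ, one_smul]
      have hbne : b n ≠ 0 := ne_of_gt (hbpos n)
      field_simp
      ring
    rwa [h6] at h5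
  have hlow : ∀ n, euclNorm x ^ (2*ℓ) / (2 ^ ℓ * B ^ n) ≤ a n := by
    intro n
    have h7 : euclNorm x ^ (2*ℓ) * (1 / b n) ≤ a n := by
      have h8 : ∀ ω, euclNorm x ^ (2*ℓ) * (Fg (PiProd g n ω) ^ (2*ℓ))⁻¹
          ≤ euclNorm (rowAct x (PiProd g n ω)) ^ (2*ℓ) := by
        intro ω
        have hW1 : (1:ℝ) ≤ Fg (PiProd g n ω) ^ (2*ℓ) := one_le_pow₀ (one_le_Fg _)
        have hW0 : (0:ℝ) < Fg (PiProd g n ω) ^ (2*ℓ) := lt_of_lt_of_le one_pos hW1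
        rw [mul_inv_le_iff₀ hW0]
        calc euclNorm x ^ (2*ℓ)
            ≤ (euclNorm (rowAct x (PiProd g n ω)) * Fg (PiProd g n ω)) ^ (2*ℓ) :=
              pow_le_pow_left₀ (euclNorm_nonneg _) (le_euclNorm_rowAct _ _) _
        _ = _ := mul_pow _ _ _
      have h9 := integral_mono ((hintInv n).const_mul (euclNorm x ^ (2*ℓ)))
        (intEucl hmeas hindep hid hmom x n) h8
      rw [integral_const_mul] at h9
      calc euclNorm x ^ (2*ℓ) * (1 / b n)
          ≤ euclNorm x ^ (2*ℓ) * ∫ ω, (Fg (PiProd g n ω) ^ (2*ℓ))⁻¹ ∂μ :=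
            mul_le_mul_of_nonneg_left (hinvb n) (pow_nonneg (euclNorm_nonneg x) _)
      _ ≤ a n := h9
    calc euclNorm x ^ (2*ℓ) / (2 ^ ℓ * B ^ n)
        ≤ euclNorm x ^ (2*ℓ) * (1 / b n) := by
          rw [div_eq_mul_one_div]
          refine mul_le_mul_of_nonneg_left ?_ (pow_nonneg (euclNorm_nonneg x) _)
          exact one_div_le_one_div_of_le (hbpos n) (hbB n)
    _ ≤ a n := h7
  have hex : 0 < euclNorm x := euclNorm_pos hx
  have hapos : ∀ n, 0 < a n := fun n =>
    lt_of_lt_of_le (div_pos (pow_pos hex _) (by positivity)) (hlow n)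
  -- coboundedness
  have hL : ∀ᶠ n : ℕ in Filter.atTop, -|(2*ℓ : ℝ) * Real.log (euclNorm x) - ℓ * Real.log 2|
      - Real.log B ≤ (1 / (n:ℝ)) * Real.log (a n) := by
    filter_upwards [Filter.eventually_ge_atTop 1] with n hn
    have hn0 : (0:ℝ) < (n:ℝ) := by
      have : 0 < n := hn
      exact_mod_cast this
    have hn1 : 1 / (n:ℝ) ≤ 1 := by
      rw [div_le_one hn0]; exact_mod_cast hn
    have hn2 : 0 < 1 / (n:ℝ) := by positivity
    have hlog : (2*ℓ : ℝ) * Real.log (euclNorm x) - ℓ * Real.log 2 - n * Real.log B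
        ≤ Real.log (a n) := by
      have h10 : Real.log (euclNorm x ^ (2*ℓ) / (2 ^ ℓ * B ^ n)) ≤ Real.log (a n) :=
        Real.log_le_log (div_pos (pow_pos hex _) (by positivity)) (hlow n)
      rw [Real.log_div (ne_of_gt (pow_pos hex _)) (by positivity), Real.log_mul (by positivity)
        (by positivity), Real.log_pow, Real.log_pow, Real.log_pow] at h10
      push_cast at h10
      linarith
    have h11 : (1 / (n:ℝ)) * ((2*ℓ : ℝ) * Real.log (euclNorm x) - ℓ * Real.log 2 - n * Real.log B)
        ≤ (1 / (n:ℝ)) * Real.log (a n) := mul_le_mul_of_nonneg_left hlog hn2.le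
    have h12 : (1 / (n:ℝ)) * ((2*ℓ : ℝ) * Real.log (euclNorm x) - ℓ * Real.log 2 - n * Real.log B)
        = (1 / (n:ℝ)) * ((2*ℓ : ℝ) * Real.log (euclNorm x) - ℓ * Real.log 2) - Real.log B := by
      field_simp
    rw [h12] at h11
    refine le_trans ?_ h11
    have h13 := neg_abs_le ((2*ℓ : ℝ) * Real.log (euclNorm x) - ℓ * Real.log 2)
    have h14 := abs_nonneg ((2*ℓ : ℝ) * Real.log (euclNorm x) - ℓ * Real.log 2)
    nlinarith [mul_le_mul_of_nonneg_left h13 hn2.le]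
  have hcob : Filter.IsCoboundedUnder (· ≤ ·) Filter.atTop
      (fun n : ℕ => (1 / (n:ℝ)) * Real.log (a n)) :=
    Filter.isCoboundedUnder_le_of_eventually_le Filter.atTop hL
  -- upper bound
  have hub : ∀ c : ℂ, Module.End.HasEigenvalue T c → ‖c‖ ≤ ρ := fun c h =>
    hρ.2 ⟨c, h, rfl⟩
  have Hmain : ∀ c : ℝ, Real.log ρ < c →
      Filter.limsup (fun n : ℕ => (1 / (n:ℝ)) * Real.log (a n)) Filter.atTop ≤ c := by
    intro c hc
    set c' : ℝ := (Real.log ρ + c) / 2 with hc'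
    have hc'1 : Real.log ρ < c' := by rw [hc']; linarith
    have hc'2 : c' < c := by rw [hc']; linarith
    set r : ℝ := Real.exp c' with hrdef
    have hρr : ρ < r := by
      calc ρ = Real.exp (Real.log ρ) := (Real.exp_log hρpos).symm
      _ < r := Real.exp_lt_exp.mpr hc'1
    obtain ⟨K, hK, hKev⟩ := spectral_growth T ρ hρpos hub Nv x hρr
    have habs : ∀ n, a n = ‖((T ^ n) Nv : ℝ × ℝ → ℂ) x‖ := by
      intro n
      rw [← ha n, Complex.norm_real, Real.norm_eq_abs, abs_of_pos (hapos n)]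
    have htend0 : Filter.Tendsto (fun n : ℕ => (1 / (n:ℝ)) * Real.log K)
        Filter.atTop (nhds 0) := by
      have := tendsto_one_div_atTop_nhds_zero_nat.mul_const (Real.log K)
      simpa using this
    have hsmall := htend0.eventually_lt_const (show (0:ℝ) < c - c' by linarith)
    refine Filter.limsup_le_of_le hcob ?_
    filter_upwards [hKev, hsmall, Filter.eventually_ge_atTop 1] with n h1 h2 h3
    have hn0 : (0:ℝ) < (n:ℝ) := by exact_mod_cast h3
    have han : a n ≤ K * r ^ n := by rw [habs n]; exact h1
    have hlogan : Real.log (a n) ≤ Real.log K + n * c' := by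
      have := Real.log_le_log (hapos n) han
      rwa [Real.log_mul (ne_of_gt hK) (by positivity), Real.log_pow, hrdef,
        Real.log_exp] at this
    calc (1 / (n:ℝ)) * Real.log (a n) ≤ (1 / (n:ℝ)) * (Real.log K + n * c') :=
          mul_le_mul_of_nonneg_left hlogan (by positivity)
    _ = (1 / (n:ℝ)) * Real.log K + c' := by field_simp
    _ ≤ (c - c') + c' := by linarith
    _ = c := by ring
  exact le_of_forall_gt_imp_ge_of_dense Hmain


end
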